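/- arXiv:1406.0907 — 2 statements merged into one kernel-verified Lean document; each statement's English description precedes it below -/
import Mathlib

section
/- Let f, g ∈ R[t][∂;'] with deg_∂ f = m ≥ 1, deg_∂ g = n ≥ 1, and let V(f,g) ∈ R(t)^{(m+n)×(m+n)} be the differential Sylvester matrix whose rows are the coefficient vectors (in powers of ∂, padded to length m+n) of f, ∂f, ..., ∂^{n−1}f, g, ∂g, ..., ∂^{m−1}g. Then V(f,g) is singular over R(t) if and only if deg_∂ gcrd(f,g) ≥ 1. -/
open Polynomial

/-- Derivative d/dt on the field of real rational functions. -/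
noncomputable def ratDeriv (q : RatFunc ℝ) : RatFunc ℝ :=
  (algebraMap (Polynomial ℝ) (RatFunc ℝ) (derivative q.num) *
      algebraMap (Polynomial ℝ) (RatFunc ℝ) q.denom -
    algebraMap (Polynomial ℝ) (RatFunc ℝ) q.num *
      algebraMap (Polynomial ℝ) (RatFunc ℝ) (derivative q.denom)) /
    (algebraMap (Polynomial ℝ) (RatFunc ℝ) q.denom) ^ 2

/-- Left multiplication by ∂ in R(t)[∂;′]: ∂·(a∂^i) = a∂^(i+1) + a′∂^i. -/
noncomputable def dMul (g : Polynomial (RatFunc ℝ)) : Polynomial (RatFunc ℝ) :=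
  X * g + g.sum fun i a => C (ratDeriv a) * X ^ i

/-- The skew (Ore) multiplication in R(t)[∂;′]. -/
noncomputable def skewMul (f g : Polynomial (RatFunc ℝ)) : Polynomial (RatFunc ℝ) :=
  f.sum fun i a => C a * dMul^[i] g

/-- h divides f on the right in R(t)[∂;′]. -/
def OreRightDvd (h f : Polynomial (RatFunc ℝ)) : Prop := ∃ u, f = skewMul u h

/-- h is a greatest common right divisor of f and g. -/
def IsGCRD (f g h : Polynomial (RatFunc ℝ)) : Prop :=
  OreRightDvd h f ∧ OreRightDvd h g ∧
    ∀ h2, OreRightDvd h2 f → OreRightDvd h2 g → h2.degree ≤ h.degree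

/-- The differential Sylvester matrix of f and g: rows are the coefficient
vectors of ∂^i f (0 ≤ i < n) followed by those of ∂^i g (0 ≤ i < m). -/
noncomputable def sylv (f g : Polynomial (RatFunc ℝ)) (m n : ℕ) :
    Matrix (Fin (m + n)) (Fin (m + n)) (RatFunc ℝ) :=
  Matrix.of fun i j =>
    if (i : ℕ) < n then (dMul^[(i : ℕ)] f).coeff j
    else (dMul^[(i : ℕ) - n] g).coeff j

/-- f has coefficients in R[t] ⊆ R(t). -/
def PolyCoeffs (f : Polynomial (RatFunc ℝ)) : Prop :=
  ∀ i, ∃ p : Polynomial ℝ, f.coeff i = algebraMap (Polynomial ℝ) (RatFunc ℝ) p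

/-!
Over `ℝ(t)` the Ore multiplication adds degrees and admits right division with remainder, so the
left ideal generated by `f` and `g` is generated by any of its nonzero elements of least degree,
and that element is a GCRD. Hence the GCRD is a constant exactly when `1 = u f + v g` for some
`u, v`.

The Sylvester matrix is the matrix of the map `(s, t) ↦ s f + t g` from `{deg s < n} × {deg t < m}`
to `{deg < m + n}`; both have dimension `m + n`, so the matrix is singular iff the map is not onto.
If it is onto, `1` is in its image. Conversely, suppose `1 = u f + v g` and `s f + t g = 0` with
`0 ≠ s`, `deg s < n`. Any `p` of degree `< m + n` equals `(p u) f + (p v) g`; dividing `p u` on the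
right by `s` and using the relation to absorb the quotient writes `p` in the image. The map is then
onto, hence injective, contradicting the relation.
-/

local notation "K" => RatFunc ℝ
local notation "ι" => algebraMap ℝ[X] K

lemma ratDeriv_div_algebraMap (p q : ℝ[X]) (hq : q ≠ 0) :
    ratDeriv (ι p / ι q) = (ι (derivative p) * ι q - ι p * ι (derivative q)) / ι q ^ 2 := by
  set x : K := ι p / ι q
  have hd : ι x.denom ≠ 0 := RatFunc.algebraMap_ne_zero x.denom_ne_zero
  have hq' : ι q ≠ 0 := RatFunc.algebraMap_ne_zero hq
  -- `x.num / x.denom` and `p / q` both represent `x`; differentiate `x.num * q = p * x.denom`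
  have hcross : x.num * q = p * x.denom := RatFunc.algebraMap_injective ℝ <| by
    rw [map_mul, map_mul, ← div_eq_div_iff hd hq', RatFunc.num_div_denom]
  have hcross' := congrArg ι (congrArg derivative hcross)
  have hcross'' := congrArg ι hcross
  simp only [derivative_mul, map_add, map_mul] at hcross' hcross''
  rw [ratDeriv, div_eq_div_iff (pow_ne_zero 2 hd) (pow_ne_zero 2 hq')]
  linear_combination (ι q * ι x.denom) * hcross'
    - (ι (derivative q) * ι x.denom + ι q * ι (derivative x.denom)) * hcross''

@[simp]
lemma ratDeriv_zero : ratDeriv 0 = 0 := by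
  simp [ratDeriv]

@[simp]
lemma ratDeriv_one : ratDeriv 1 = 0 := by
  simp [ratDeriv]

lemma ratDeriv_add (x y : K) : ratDeriv (x + y) = ratDeriv x + ratDeriv y := by
  induction x using RatFunc.induction_on with | _ p₁ q₁ hq₁ => ?_
  induction y using RatFunc.induction_on with | _ p₂ q₂ hq₂ => ?_
  have hsum : ι p₁ / ι q₁ + ι p₂ / ι q₂ = ι (p₁ * q₂ + p₂ * q₁) / ι (q₁ * q₂) := by
    rw [div_add_div _ _ (RatFunc.algebraMap_ne_zero hq₁) (RatFunc.algebraMap_ne_zero hq₂)]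
    simp only [map_add, map_mul]
    ring
  rw [hsum, ratDeriv_div_algebraMap _ _ (mul_ne_zero hq₁ hq₂), ratDeriv_div_algebraMap _ _ hq₁,
    ratDeriv_div_algebraMap _ _ hq₂]
  have hq₁' := RatFunc.algebraMap_ne_zero hq₁
  have hq₂' := RatFunc.algebraMap_ne_zero hq₂
  simp only [derivative_mul, map_add, map_mul]
  field_simp
  ring

lemma ratDeriv_mul (x y : K) : ratDeriv (x * y) = ratDeriv x * y + x * ratDeriv y := by
  induction x using RatFunc.induction_on with | _ p₁ q₁ hq₁ => ?_
  induction y using RatFunc.induction_on with | _ p₂ q₂ hq₂ => ?_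
  rw [div_mul_div_comm, ← map_mul, ← map_mul, ratDeriv_div_algebraMap _ _ (mul_ne_zero hq₁ hq₂),
    ratDeriv_div_algebraMap _ _ hq₁, ratDeriv_div_algebraMap _ _ hq₂]
  have hq₁' := RatFunc.algebraMap_ne_zero hq₁
  have hq₂' := RatFunc.algebraMap_ne_zero hq₂
  simp only [derivative_mul, map_add, map_mul]
  field_simp
  ring

noncomputable def coeffDeriv (p : K[X]) : K[X] :=
  p.sum fun i a => C (ratDeriv a) * X ^ i

lemma dMul_eq (p : K[X]) : dMul p = X * p + coeffDeriv p := rfl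

@[simp]
lemma coeff_coeffDeriv (p : K[X]) (j : ℕ) : (coeffDeriv p).coeff j = ratDeriv (p.coeff j) := by
  rw [coeffDeriv, Polynomial.sum_def, finsetSum_coeff]
  simp_rw [coeff_C_mul_X_pow]
  rw [Finset.sum_ite_eq]
  split_ifs with hj
  · rfl
  · rw [notMem_support_iff.mp hj, ratDeriv_zero]

lemma degree_coeffDeriv_lt {p : K[X]} (hp : p ≠ 0) : (coeffDeriv p).degree < (X * p).degree := by
  rw [degree_eq_natDegree (mul_ne_zero X_ne_zero hp), natDegree_X_mul hp]
  refine lt_of_le_of_lt ?_ (WithBot.coe_lt_coe.mpr p.natDegree.lt_succ_self)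
  rw [degree_le_iff_coeff_zero]
  intro j hj
  rw [coeff_coeffDeriv, coeff_eq_zero_of_natDegree_lt (Nat.cast_lt.mp hj), ratDeriv_zero]

lemma dMul_add (p q : K[X]) : dMul (p + q) = dMul p + dMul q := by
  have : coeffDeriv (p + q) = coeffDeriv p + coeffDeriv q := by
    ext j
    simp [ratDeriv_add]
  rw [dMul_eq, dMul_eq, dMul_eq, this]
  ring

@[simp]
lemma dMul_zero : dMul 0 = 0 := by
  simpa using dMul_add 0 0

lemma dMul_monomial (i : ℕ) (a : K) :
    dMul (monomial i a) = monomial (i + 1) a + monomial i (ratDeriv a) := by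
  have : coeffDeriv (monomial i a) = monomial i (ratDeriv a) := by
    ext j
    simp only [coeff_coeffDeriv, coeff_monomial]
    split_ifs <;> simp
  rw [dMul_eq, X_mul_monomial, this]

lemma dMul_C_mul (a : K) (p : K[X]) :
    dMul (C a * p) = C a * dMul p + C (ratDeriv a) * p := by
  have : coeffDeriv (C a * p) = C a * coeffDeriv p + C (ratDeriv a) * p := by
    ext j
    simp [ratDeriv_mul, add_comm]
  rw [dMul_eq, dMul_eq, this]
  ring

lemma dMul_ne_zero {p : K[X]} (hp : p ≠ 0) : dMul p ≠ 0 := by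
  rw [← degree_ne_bot, dMul_eq, degree_add_eq_left_of_degree_lt (degree_coeffDeriv_lt hp),
    degree_ne_bot]
  exact mul_ne_zero X_ne_zero hp

lemma natDegree_dMul {p : K[X]} (hp : p ≠ 0) : (dMul p).natDegree = p.natDegree + 1 := by
  rw [dMul_eq, natDegree_add_eq_left_of_degree_lt (degree_coeffDeriv_lt hp), natDegree_X_mul hp]

lemma leadingCoeff_dMul {p : K[X]} (hp : p ≠ 0) : (dMul p).leadingCoeff = p.leadingCoeff := by
  rw [dMul_eq, leadingCoeff_add_of_degree_lt' (degree_coeffDeriv_lt hp), X_mul,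
    leadingCoeff_mul_X]

lemma dMul_iterate_zero (k : ℕ) : dMul^[k] 0 = 0 :=
  Function.iterate_fixed dMul_zero k

lemma dMul_iterate_add (k : ℕ) (p q : K[X]) :
    dMul^[k] (p + q) = dMul^[k] p + dMul^[k] q := by
  induction k generalizing p q with
  | zero => rfl
  | succ k ih => simp only [Function.iterate_succ_apply, dMul_add, ih]

lemma dMul_iterate_ne_zero {p : K[X]} (hp : p ≠ 0) (k : ℕ) : dMul^[k] p ≠ 0 := by
  induction k with
  | zero => exact hp
  | succ k ih => rw [Function.iterate_succ_apply']; exact dMul_ne_zero ih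

lemma natDegree_dMul_iterate {p : K[X]} (hp : p ≠ 0) (k : ℕ) :
    (dMul^[k] p).natDegree = p.natDegree + k := by
  induction k with
  | zero => rfl
  | succ k ih =>
    rw [Function.iterate_succ_apply', natDegree_dMul (dMul_iterate_ne_zero hp k), ih, add_assoc]

lemma leadingCoeff_dMul_iterate {p : K[X]} (hp : p ≠ 0) (k : ℕ) :
    (dMul^[k] p).leadingCoeff = p.leadingCoeff := by
  induction k with
  | zero => rfl
  | succ k ih =>
    rw [Function.iterate_succ_apply', leadingCoeff_dMul (dMul_iterate_ne_zero hp k), ih]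

lemma degree_dMul_iterate_le (p : K[X]) (k : ℕ) : (dMul^[k] p).degree ≤ p.degree + k := by
  rcases eq_or_ne p 0 with rfl | hp
  · simp [dMul_iterate_zero]
  · rw [degree_eq_natDegree (dMul_iterate_ne_zero hp k), degree_eq_natDegree hp,
      natDegree_dMul_iterate hp k]
    norm_cast

lemma dMul_iterate_one (k : ℕ) : dMul^[k] (1 : K[X]) = X ^ k := by
  induction k with
  | zero => rfl
  | succ k ih =>
    rw [Function.iterate_succ_apply', ih, ← monomial_one_right_eq_X_pow, dMul_monomial,
      ratDeriv_one, monomial_zero_right, add_zero, monomial_one_right_eq_X_pow]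

lemma skewMul_monomial (i : ℕ) (a : K) (g : K[X]) :
    skewMul (monomial i a) g = C a * dMul^[i] g :=
  sum_monomial_index _ _ (by rw [map_zero, zero_mul])

lemma add_skewMul (f₁ f₂ g : K[X]) : skewMul (f₁ + f₂) g = skewMul f₁ g + skewMul f₂ g := by
  rw [skewMul, skewMul, skewMul, sum_add_index]
  · intro i; rw [map_zero, zero_mul]
  · intro i b₁ b₂; rw [map_add, add_mul]

lemma C_mul_skewMul (c : K) (f g : K[X]) : skewMul (C c * f) g = C c * skewMul f g := by
  induction f using Polynomial.induction_on' with
  | add p q hp hq => rw [mul_add, add_skewMul, hp, hq, add_skewMul, mul_add]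
  | monomial i a => rw [C_mul_monomial, skewMul_monomial, skewMul_monomial, map_mul, mul_assoc]

noncomputable def skewMulRight (g : K[X]) : K[X] →ₗ[K] K[X] where
  toFun f := skewMul f g
  map_add' f₁ f₂ := add_skewMul f₁ f₂ g
  map_smul' c f := by simp only [smul_eq_C_mul, C_mul_skewMul, RingHom.id_apply]

@[simp]
lemma zero_skewMul (g : K[X]) : skewMul 0 g = 0 := (skewMulRight g).map_zero

lemma sub_skewMul (f₁ f₂ g : K[X]) : skewMul (f₁ - f₂) g = skewMul f₁ g - skewMul f₂ g :=
  (skewMulRight g).map_sub f₁ f₂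

lemma skewMul_add (f g₁ g₂ : K[X]) : skewMul f (g₁ + g₂) = skewMul f g₁ + skewMul f g₂ := by
  simp only [skewMul, Polynomial.sum_def, ← Finset.sum_add_distrib, dMul_iterate_add, mul_add]

@[simp]
lemma skewMul_zero (f : K[X]) : skewMul f 0 = 0 := by
  simp [skewMul, dMul_iterate_zero, Polynomial.sum_def]

lemma dMul_skewMul (f g : K[X]) : skewMul (dMul f) g = dMul (skewMul f g) := by
  induction f using Polynomial.induction_on' with
  | add p q hp hq => rw [dMul_add, add_skewMul, hp, hq, add_skewMul, dMul_add]
  | monomial i a =>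
    rw [dMul_monomial, add_skewMul, skewMul_monomial, skewMul_monomial, skewMul_monomial,
      dMul_C_mul, ← Function.iterate_succ_apply' dMul]

lemma skewMul_assoc (f g h : K[X]) : skewMul (skewMul f g) h = skewMul f (skewMul g h) := by
  induction f using Polynomial.induction_on' with
  | add p q hp hq => rw [add_skewMul, add_skewMul, add_skewMul, hp, hq]
  | monomial i a =>
    have hiter : ∀ p, skewMul (dMul^[i] p) h = dMul^[i] (skewMul p h) := by
      induction i with
      | zero => exact fun _ => rfl
      | succ k ih => intro p; rw [Function.iterate_succ_apply', Function.iterate_succ_apply',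
          dMul_skewMul, ih]
    rw [skewMul_monomial, C_mul_skewMul, hiter, skewMul_monomial]

lemma C_skewMul (c : K) (g : K[X]) : skewMul (C c) g = C c * g := by
  rw [← monomial_zero_left, skewMul_monomial, Function.iterate_zero_apply, monomial_zero_left]

lemma one_skewMul (g : K[X]) : skewMul 1 g = g := by
  simpa using C_skewMul 1 g

lemma skewMul_one (f : K[X]) : skewMul f 1 = f := by
  conv_rhs => rw [← sum_C_mul_X_pow_eq f]
  simp only [skewMul, dMul_iterate_one]

lemma skewMul_eq_sum_range {s : K[X]} {N : ℕ} (hs : s.degree < N) (g : K[X]) :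
    skewMul s g = ∑ i ∈ Finset.range N, C (s.coeff i) * dMul^[i] g := by
  rw [skewMul, Polynomial.sum_def]
  refine Finset.sum_subset (fun i hi => ?_) (fun i _ hi => ?_)
  · exact Finset.mem_range.mpr <| Nat.cast_lt.mp <|
      (le_degree_of_ne_zero (mem_support_iff.mp hi)).trans_lt hs
  · rw [notMem_support_iff.mp hi, map_zero, zero_mul]

lemma degree_skewMul_le (f g : K[X]) : (skewMul f g).degree ≤ f.degree + g.degree := by
  rw [skewMul, Polynomial.sum_def]
  refine (degree_sum_le _ _).trans (Finset.sup_le fun i hi => ?_)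
  refine (degree_mul_le _ _).trans ?_
  refine (add_le_add degree_C_le (degree_dMul_iterate_le g i)).trans ?_
  rw [zero_add, add_comm f.degree]
  exact add_le_add_right (le_degree_of_ne_zero (mem_support_iff.mp hi)) _

lemma coeff_skewMul_natDegree_add (f : K[X]) {g : K[X]} (hg : g ≠ 0) :
    (skewMul f g).coeff (f.natDegree + g.natDegree) = f.leadingCoeff * g.leadingCoeff := by
  have hf : f.degree < (f.natDegree + 1 : ℕ) :=
    degree_le_natDegree.trans_lt (Nat.cast_lt.mpr f.natDegree.lt_succ_self)
  rw [skewMul_eq_sum_range hf g, Finset.sum_range_succ, coeff_add, finsetSum_coeff,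
    Finset.sum_eq_zero, zero_add, coeff_C_mul, add_comm f.natDegree, ← natDegree_dMul_iterate hg,
    coeff_natDegree, coeff_natDegree, leadingCoeff_dMul_iterate hg]
  intro i hi
  have := Finset.mem_range.mp hi
  rw [coeff_C_mul, coeff_eq_zero_of_natDegree_lt (p := dMul^[i] g) (by
    rw [natDegree_dMul_iterate hg]; omega), mul_zero]

lemma skewMul_ne_zero {f g : K[X]} (hf : f ≠ 0) (hg : g ≠ 0) : skewMul f g ≠ 0 := by
  intro h
  have := coeff_skewMul_natDegree_add f hg
  rw [h, coeff_zero] at this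
  exact mul_ne_zero (leadingCoeff_ne_zero.mpr hf) (leadingCoeff_ne_zero.mpr hg) this.symm

lemma natDegree_skewMul {f g : K[X]} (hf : f ≠ 0) (hg : g ≠ 0) :
    (skewMul f g).natDegree = f.natDegree + g.natDegree := by
  refine le_antisymm (natDegree_le_iff_degree_le.mpr ?_) (le_natDegree_of_ne_zero ?_)
  · refine (degree_skewMul_le f g).trans ?_
    rw [degree_eq_natDegree hf, degree_eq_natDegree hg]
    rfl
  · rw [coeff_skewMul_natDegree_add f hg]
    exact mul_ne_zero (leadingCoeff_ne_zero.mpr hf) (leadingCoeff_ne_zero.mpr hg)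

lemma leadingCoeff_skewMul {f g : K[X]} (hf : f ≠ 0) (hg : g ≠ 0) :
    (skewMul f g).leadingCoeff = f.leadingCoeff * g.leadingCoeff := by
  rw [leadingCoeff, natDegree_skewMul hf hg, coeff_skewMul_natDegree_add f hg]

lemma degree_skewMul_lt {s p : K[X]} {k l : ℕ} (hs : s.degree < k) (hp : p.degree ≤ l) :
    (skewMul s p).degree < (k + l : ℕ) := by
  rcases eq_or_ne p 0 with rfl | hp0
  · simp
  exact (degree_skewMul_le s p).trans_lt <| by
    push_cast
    exact WithBot.add_lt_add_of_lt_of_le (degree_ne_bot.mpr hp0) hs hp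

lemma degree_lt_of_degree_skewMul_lt {t g : K[X]} {m n : ℕ} (hg : g.degree = n)
    (h : (skewMul t g).degree < (m + n : ℕ)) : t.degree < m := by
  rcases eq_or_ne t 0 with rfl | ht
  · simp
  have hg0 : g ≠ 0 := by rintro rfl; simp at hg
  rw [degree_eq_natDegree (skewMul_ne_zero ht hg0), natDegree_skewMul ht hg0,
    natDegree_eq_of_degree_eq_some hg, Nat.cast_lt] at h
  rw [degree_eq_natDegree ht, Nat.cast_lt]
  omega

lemma OreRightDvd.degree_le {h p : K[X]} (hdvd : OreRightDvd h p) (hp : p ≠ 0) :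
    h.degree ≤ p.degree := by
  obtain ⟨u, rfl⟩ := hdvd
  have hu : u ≠ 0 := by rintro rfl; simp at hp
  have hh : h ≠ 0 := by rintro rfl; simp at hp
  rw [degree_eq_natDegree hp, natDegree_skewMul hu hh, degree_eq_natDegree hh, Nat.cast_le]
  omega

theorem exists_eq_skewMul_add_of_degree_lt {h : K[X]} (hh : h ≠ 0) (f : K[X]) :
    ∃ q r, f = skewMul q h + r ∧ r.degree < h.degree := by
  induction f using WellFounded.induction degree_lt_wf with
  | _ f ih =>
  by_cases hlt : f.degree < h.degree
  · exact ⟨0, f, by simp, hlt⟩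
  have hf : f ≠ 0 := by
    rintro rfl
    exact hlt (bot_lt_iff_ne_bot.mpr (degree_ne_bot.mpr hh))
  have hle : h.natDegree ≤ f.natDegree := natDegree_le_natDegree (not_lt.mp hlt)
  -- a monomial left multiple of `h` with the leading term of `f`
  set a := monomial (f.natDegree - h.natDegree) (f.leadingCoeff / h.leadingCoeff)
  have hc : f.leadingCoeff / h.leadingCoeff ≠ 0 := by simp [hf, hh]
  have ha : a ≠ 0 := by simpa [a] using hc
  have hdeg : (skewMul a h).degree = f.degree := by
    rw [degree_eq_natDegree (skewMul_ne_zero ha hh), natDegree_skewMul ha hh,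
      natDegree_monomial_eq _ hc, degree_eq_natDegree hf, Nat.sub_add_cancel hle]
  have hlc : (skewMul a h).leadingCoeff = f.leadingCoeff := by
    rw [leadingCoeff_skewMul ha hh, leadingCoeff_monomial,
      div_mul_cancel₀ _ (leadingCoeff_ne_zero.mpr hh)]
  obtain ⟨q, r, hq, hr⟩ := ih _ (degree_sub_lt_left hdeg.symm hf hlc.symm)
  exact ⟨a + q, r, by rw [add_skewMul, add_assoc, ← hq, add_sub_cancel], hr⟩

section leftIdeal

def InLeftIdeal (f g p : K[X]) : Prop :=
  ∃ u v, p = skewMul u f + skewMul v g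

variable {f g : K[X]}

lemma inLeftIdeal_left : InLeftIdeal f g f :=
  ⟨1, 0, by rw [one_skewMul, zero_skewMul, add_zero]⟩

lemma inLeftIdeal_right : InLeftIdeal f g g :=
  ⟨0, 1, by rw [one_skewMul, zero_skewMul, zero_add]⟩

lemma InLeftIdeal.sub {p q : K[X]} (hp : InLeftIdeal f g p) (hq : InLeftIdeal f g q) :
    InLeftIdeal f g (p - q) := by
  obtain ⟨u, v, rfl⟩ := hp
  obtain ⟨u', v', rfl⟩ := hq
  exact ⟨u - u', v - v', by rw [sub_skewMul, sub_skewMul]; abel⟩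

lemma InLeftIdeal.skewMul_left {p : K[X]} (w : K[X]) (hp : InLeftIdeal f g p) :
    InLeftIdeal f g (skewMul w p) := by
  obtain ⟨u, v, rfl⟩ := hp
  exact ⟨skewMul w u, skewMul w v, by rw [skewMul_add, skewMul_assoc, skewMul_assoc]⟩

lemma InLeftIdeal.oreRightDvd {h p : K[X]} (hp : InLeftIdeal f g p) (hf : OreRightDvd h f)
    (hg : OreRightDvd h g) : OreRightDvd h p := by
  obtain ⟨u, v, rfl⟩ := hp
  obtain ⟨a, rfl⟩ := hf
  obtain ⟨b, rfl⟩ := hg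
  exact ⟨skewMul u a + skewMul v b, by rw [add_skewMul, skewMul_assoc, skewMul_assoc]⟩

lemma InLeftIdeal.one_of_degree_le_zero {p : K[X]} (hp : InLeftIdeal f g p) (hp0 : p ≠ 0)
    (hdeg : p.degree ≤ 0) : InLeftIdeal f g 1 := by
  have hc : p.coeff 0 ≠ 0 := fun hc => hp0 (by rw [eq_C_of_degree_le_zero hdeg, hc, map_zero])
  convert hp.skewMul_left (C (p.coeff 0)⁻¹)
  rw [C_skewMul, eq_C_of_degree_le_zero hdeg, coeff_C_zero, ← map_mul, inv_mul_cancel₀ hc, map_one]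

theorem exists_isGCRD (hf : f ≠ 0) : ∃ h, h ≠ 0 ∧ InLeftIdeal f g h ∧ IsGCRD f g h := by
  obtain ⟨h, ⟨hI, hh0⟩, hmin⟩ :=
    degree_lt_wf.has_min {p | InLeftIdeal f g p ∧ p ≠ 0} ⟨f, inLeftIdeal_left, hf⟩
  have hdvd : ∀ p, InLeftIdeal f g p → OreRightDvd h p := by
    intro p hp
    obtain ⟨q, r, rfl, hr⟩ := exists_eq_skewMul_add_of_degree_lt hh0 p
    have hrI : InLeftIdeal f g r := by simpa using hp.sub (hI.skewMul_left q)
    by_cases hr0 : r = 0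
    · exact ⟨q, by rw [hr0, add_zero]⟩
    · exact absurd hr (hmin r ⟨hrI, hr0⟩)
  refine ⟨h, hh0, hI, hdvd f inLeftIdeal_left, hdvd g inLeftIdeal_right, fun h₂ hf₂ hg₂ => ?_⟩
  exact (hI.oreRightDvd hf₂ hg₂).degree_le hh0

theorem exists_isGCRD_one_le_degree_iff (hf : f ≠ 0) :
    (∃ h, IsGCRD f g h ∧ 1 ≤ h.degree) ↔ ¬InLeftIdeal f g 1 := by
  constructor
  · rintro ⟨h, ⟨hhf, hhg, -⟩, hdeg⟩ hone
    have := (hone.oreRightDvd hhf hhg).degree_le one_ne_zero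
    rw [degree_one] at this
    exact absurd (hdeg.trans this) (by decide)
  · intro hone
    obtain ⟨h, hh0, hI, hgcrd⟩ := exists_isGCRD (g := g) hf
    refine ⟨h, hgcrd, not_lt.mp fun hlt => hone ?_⟩
    exact hI.one_of_degree_le_zero hh0 (Nat.WithBot.lt_one_iff_le_zero.mp hlt)

end leftIdeal

section sylvester

instance (N : ℕ) : FiniteDimensional K (degreeLT K N) :=
  LinearEquiv.finiteDimensional (degreeLTEquiv K N).symm

lemma finrank_degreeLT (N : ℕ) : Module.finrank K (degreeLT K N) = N := by
  rw [(degreeLTEquiv K N).finrank_eq, Module.finrank_fin_fun]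

noncomputable def sylvMap (f g : K[X]) (m n : ℕ) : degreeLT K n × degreeLT K m →ₗ[K] K[X] :=
  (skewMulRight f ∘ₗ (degreeLT K n).subtype).coprod (skewMulRight g ∘ₗ (degreeLT K m).subtype)

lemma sylvMap_apply (f g : K[X]) (m n : ℕ) (x : degreeLT K n × degreeLT K m) :
    sylvMap f g m n x = skewMul x.1 f + skewMul x.2 g := rfl

-- The coordinates of `(s, t)` in which `sylv f g m n` is the matrix of `sylvMap f g m n`.
noncomputable def sylvCoords (m n : ℕ) : degreeLT K n × degreeLT K m →ₗ[K] Fin (m + n) → K where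
  toFun x i := if (i : ℕ) < n then (x.1 : K[X]).coeff i else (x.2 : K[X]).coeff (i - n)
  map_add' x y := by ext i; by_cases hi : (i : ℕ) < n <;> simp [hi]
  map_smul' c x := by ext i; by_cases hi : (i : ℕ) < n <;> simp [hi]

variable {f g : K[X]} {m n : ℕ}

lemma sylvCoords_injective : Function.Injective (sylvCoords m n) := by
  rw [← LinearMap.ker_eq_bot, LinearMap.ker_eq_bot']
  rintro ⟨s, t⟩ hx
  have hs : degreeLTEquiv K n s = 0 := funext fun i => show (s : K[X]).coeff i = 0 by
    simpa [sylvCoords] using congrFun hx ⟨i, by omega⟩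
  have ht : degreeLTEquiv K m t = 0 := funext fun i => show (t : K[X]).coeff i = 0 by
    simpa [sylvCoords] using congrFun hx ⟨n + i, by omega⟩
  simp_all

lemma sylvCoords_bijective : Function.Bijective (sylvCoords m n) := by
  refine ⟨sylvCoords_injective, (LinearMap.injective_iff_surjective_of_finrank_eq_finrank ?_).mp
    sylvCoords_injective⟩
  rw [Module.finrank_prod, finrank_degreeLT, finrank_degreeLT, Module.finrank_fin_fun, add_comm]

lemma vecMul_sylvCoords (x : degreeLT K n × degreeLT K m) :
    Matrix.vecMul (sylvCoords m n x) (sylv f g m n) =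
      fun j : Fin (m + n) => (sylvMap f g m n x).coeff j := by
  obtain ⟨⟨s, hs⟩, ⟨t, ht⟩⟩ := x
  ext j
  let F : ℕ → K := fun k => if k < n then s.coeff k * (dMul^[k] f).coeff j
    else t.coeff (k - n) * (dMul^[k - n] g).coeff j
  have hterm : ∀ i : Fin (m + n), sylvCoords m n (⟨s, hs⟩, ⟨t, ht⟩) i * sylv f g m n i j = F i := by
    intro i
    by_cases hi : (i : ℕ) < n <;> simp [sylvCoords, sylv, F, hi]
  have hsplit : ∑ k ∈ Finset.range (m + n), F k =
      ∑ k ∈ Finset.range n, F k + ∑ k ∈ Finset.range m, F (n + k) := by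
    rw [← Finset.sum_range_add, add_comm]
  rw [Matrix.vecMul, dotProduct, Fintype.sum_congr _ _ hterm, Fin.sum_univ_eq_sum_range F,
    hsplit, sylvMap_apply, coeff_add,
    skewMul_eq_sum_range (mem_degreeLT.mp hs), skewMul_eq_sum_range (mem_degreeLT.mp ht),
    finsetSum_coeff, finsetSum_coeff]
  congr 1 <;> refine Finset.sum_congr rfl fun k hk => ?_
  · simp [F, coeff_C_mul, Finset.mem_range.mp hk]
  · simp [F, coeff_C_mul]

lemma range_sylvMap_le (hf : f.degree ≤ m) (hg : g.degree ≤ n) :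
    LinearMap.range (sylvMap f g m n) ≤ degreeLT K (m + n) := by
  rintro _ ⟨x, rfl⟩
  rw [mem_degreeLT, sylvMap_apply]
  refine (degree_add_le _ _).trans_lt (max_lt ?_ ?_)
  · rw [add_comm m]
    exact degree_skewMul_lt (mem_degreeLT.mp x.1.2) hf
  · exact degree_skewMul_lt (mem_degreeLT.mp x.2.2) hg

theorem det_sylv_eq_zero_iff (hf : f.degree ≤ m) (hg : g.degree ≤ n) :
    (sylv f g m n).det = 0 ↔ ¬Function.Injective (sylvMap f g m n) := by
  have hzero : ∀ x, Matrix.vecMul (sylvCoords m n x) (sylv f g m n) = 0 ↔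
      sylvMap f g m n x = 0 := by
    intro x
    rw [vecMul_sylvCoords, funext_iff]
    refine ⟨fun h => ext fun k => ?_, fun h j => by simp [h]⟩
    by_cases hk : k < m + n
    · exact h ⟨k, hk⟩
    · have hx : (sylvMap f g m n x).degree < (m + n : ℕ) :=
        mem_degreeLT.mp (range_sylvMap_le hf hg ⟨x, rfl⟩)
      exact coeff_eq_zero_of_degree_lt (hx.trans_le (Nat.cast_le.mpr (not_lt.mp hk)))
  rw [← Matrix.exists_vecMul_eq_zero_iff, injective_iff_map_eq_zero]
  push Not
  constructor
  · rintro ⟨c, hc0, hc⟩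
    obtain ⟨x, rfl⟩ := sylvCoords_bijective.2 c
    exact ⟨x, (hzero x).1 hc, by rintro rfl; exact hc0 (map_zero _)⟩
  · rintro ⟨x, hx, hx0⟩
    exact ⟨sylvCoords m n x, (map_ne_zero_iff _ sylvCoords_injective).mpr hx0, (hzero x).2 hx⟩

lemma injective_sylvMap_iff (hf : f.degree ≤ m) (hg : g.degree ≤ n) :
    Function.Injective (sylvMap f g m n) ↔
      LinearMap.range (sylvMap f g m n) = degreeLT K (m + n) := by
  have hrank := LinearMap.finrank_range_add_finrank_ker (sylvMap f g m n)
  rw [Module.finrank_prod, finrank_degreeLT, finrank_degreeLT] at hrank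
  rw [← LinearMap.ker_eq_bot, ← Submodule.finrank_eq_zero]
  constructor
  · intro hker
    refine Submodule.eq_of_le_of_finrank_eq (range_sylvMap_le hf hg) ?_
    rw [finrank_degreeLT]
    omega
  · intro hrange
    rw [hrange, finrank_degreeLT] at hrank
    omega

end sylvester

section main

variable {f g : K[X]} {m n : ℕ}

theorem degreeLT_le_range_sylvMap (hf : f.degree ≤ m) (hg : g.degree = n)
    (hone : InLeftIdeal f g 1) {s t : K[X]} (hs0 : s ≠ 0) (hs : s.degree < n)
    (hrel : skewMul s f + skewMul t g = 0) :
    degreeLT K (m + n) ≤ LinearMap.range (sylvMap f g m n) := by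
  obtain ⟨u, v, huv⟩ := hone
  intro p hp
  obtain ⟨q, r, hqr, hr⟩ := exists_eq_skewMul_add_of_degree_lt hs0 (skewMul p u)
  have hp' : p = skewMul r f + skewMul (skewMul p v - skewMul q t) g := by
    calc p = skewMul p (skewMul u f + skewMul v g) := by rw [← huv, skewMul_one]
      _ = skewMul q (skewMul s f + skewMul t g) + skewMul r f
          + (skewMul (skewMul p v) g - skewMul (skewMul q t) g) := by
        rw [skewMul_add, ← skewMul_assoc, ← skewMul_assoc, hqr, add_skewMul, skewMul_add]
        simp only [skewMul_assoc]
        abel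
      _ = _ := by rw [hrel, skewMul_zero, zero_add, sub_skewMul]
  have hrn : r.degree < n := hr.trans hs
  have hvm : (skewMul p v - skewMul q t).degree < m := by
    refine degree_lt_of_degree_skewMul_lt hg ?_
    rw [eq_sub_of_add_eq' hp'.symm]
    refine (degree_sub_le _ _).trans_lt (max_lt (mem_degreeLT.mp hp) ?_)
    rw [add_comm m]
    exact degree_skewMul_lt hrn hf
  exact ⟨(⟨r, mem_degreeLT.mpr hrn⟩, ⟨_, mem_degreeLT.mpr hvm⟩), hp'.symm⟩

theorem injective_sylvMap_of_inLeftIdeal_one (hf : f.degree ≤ m) (hg : g.degree = n)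
    (hone : InLeftIdeal f g 1) : Function.Injective (sylvMap f g m n) := by
  rw [injective_iff_map_eq_zero]
  rintro ⟨⟨s, hs⟩, ⟨t, ht⟩⟩ hrel
  rw [sylvMap_apply] at hrel
  rcases eq_or_ne s 0 with rfl | hs0
  · have hg0 : g ≠ 0 := by rintro rfl; simp at hg
    have ht0 : t = 0 := by
      by_contra ht0
      exact skewMul_ne_zero ht0 hg0 (by simpa using hrel)
    subst ht0
    rfl
  · have hrange := le_antisymm (range_sylvMap_le hf hg.le)
      (degreeLT_le_range_sylvMap hf hg hone hs0 (mem_degreeLT.mp hs) hrel)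
    exact (injective_iff_map_eq_zero _).mp ((injective_sylvMap_iff hf hg.le).mpr hrange) _ hrel

theorem inLeftIdeal_one_of_injective_sylvMap (hf : f.degree = m) (hg : g.degree ≤ n)
    (hinj : Function.Injective (sylvMap f g m n)) : InLeftIdeal f g 1 := by
  rcases Nat.eq_zero_or_pos m with rfl | hm
  · exact inLeftIdeal_left.one_of_degree_le_zero (by rintro rfl; simp at hf) hf.le
  · have h1 : (1 : K[X]) ∈ LinearMap.range (sylvMap f g m n) := by
      rw [(injective_sylvMap_iff hf.le hg).mp hinj, mem_degreeLT, degree_one]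
      exact_mod_cast (by omega : 0 < m + n)
    obtain ⟨x, hx⟩ := h1
    exact ⟨x.1, x.2, hx.symm⟩

theorem det_sylv_eq_zero_iff_not_inLeftIdeal_one (hf : f.degree = m) (hg : g.degree = n) :
    (sylv f g m n).det = 0 ↔ ¬InLeftIdeal f g 1 := by
  rw [det_sylv_eq_zero_iff hf.le hg.le, not_iff_not]
  exact ⟨inLeftIdeal_one_of_injective_sylvMap hf hg.le,
    injective_sylvMap_of_inLeftIdeal_one hf.le hg⟩

end main

theorem sylv_singular_iff_general (f g : Polynomial (RatFunc ℝ)) (m n : ℕ)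
    (hfd : f.degree = (m : WithBot ℕ)) (hgd : g.degree = (n : WithBot ℕ)) :
    (sylv f g m n).det = 0 ↔ ∃ h, IsGCRD f g h ∧ 1 ≤ h.degree := by
  have hf0 : f ≠ 0 := by
    rintro rfl
    simp at hfd
  rw [det_sylv_eq_zero_iff_not_inLeftIdeal_one hfd hgd, exists_isGCRD_one_le_degree_iff hf0]

/-- The differential Sylvester matrix is singular over R(t) iff the GCRD is non-trivial. -/
theorem sylv_singular_iff (f g : Polynomial (RatFunc ℝ)) (m n : ℕ)
    (hm : 1 ≤ m) (hn : 1 ≤ n)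
    (hfd : f.degree = (m : WithBot ℕ)) (hgd : g.degree = (n : WithBot ℕ))
    (hfp : PolyCoeffs f) (hgp : PolyCoeffs g) :
    (sylv f g m n).det = 0 ↔ ∃ h, IsGCRD f g h ∧ 1 ≤ h.degree :=
  sylv_singular_iff_general f g m n hfd hgd
end

section
/- Let f, g ∈ R[t][∂;'] with deg_∂ f ≤ m, deg_∂ g ≤ n, both of degree at most d ≥ 2 in t, and let V = V(f,g) be the differential Sylvester matrix. Then ‖V‖_F² ≤ d^{2n}‖f‖² + d^{2m}‖g‖², where ‖V‖_F² = Σ_{ij} ‖V_{ij}‖² sums the squared coefficient 2-norms of the polynomial entries. -/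
/-!
Write `∂ = D + X`, where `X` shifts the rows of coefficients and `D` differentiates every
coefficient in `t`. The two commute, so `∂^k = ∑ C(k,j) D^j X^(k-j)`. On coefficient vectors
truncated to `m + n` rows, `X` does not increase the 2-norm, and on coefficients of `t`-degree
at most `e` the derivative `D` increases it by a factor at most `e`; hence
`‖∂^k f‖ ≤ β_k ‖f‖` with `β_k = ∑ C(k,j) d(d-1)⋯(d-j+1)`. It remains to show
`∑_{k<n} β_k² ≤ d^(2n)`: for `d ≥ 3` this follows from `(d-1) β_k ≤ d^(k+1)`, and for `d = 2`
from `β_k = k² + k + 1`. (The cruder one-step bound `‖∂h‖² ≤ (d²+1)‖h‖²` is false: take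
`h = t + t²∂` and `d = 2`.)
-/

open Polynomial

/-- Left multiplication by ∂ in R[t][∂;′]: ∂·(a∂^i) = a∂^(i+1) + a′∂^i. -/
noncomputable def dMulP (g : Polynomial (Polynomial ℝ)) : Polynomial (Polynomial ℝ) :=
  X * g + g.sum fun i a => C (derivative a) * X ^ i

/-- The skew (Ore) multiplication in R[t][∂;′]. -/
noncomputable def skewMulP (f g : Polynomial (Polynomial ℝ)) : Polynomial (Polynomial ℝ) :=
  f.sum fun i a => C a * dMulP^[i] g


/-- The differential Sylvester matrix of f, g ∈ R[t][∂;′] over R[t]. -/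
noncomputable def sylvP (f g : Polynomial (Polynomial ℝ)) (m n : ℕ) :
    Matrix (Fin (m + n)) (Fin (m + n)) (Polynomial ℝ) :=
  Matrix.of fun i j =>
    if (i : ℕ) < n then (dMulP^[(i : ℕ)] f).coeff j
    else (dMulP^[(i : ℕ) - n] g).coeff j


/-- Squared coefficient 2-norm of p ∈ R[t]. -/
noncomputable def polyNormSq (p : Polynomial ℝ) : ℝ := p.sum fun _ a => a ^ 2

/-- Squared coefficient 2-norm of f ∈ R[t][∂;′]. -/
noncomputable def dNormSq (f : Polynomial (Polynomial ℝ)) : ℝ := f.sum fun _ a => polyNormSq a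

open Finset

noncomputable def derivCoeffs : Module.End ℝ (Polynomial (Polynomial ℝ)) where
  toFun h := h.sum fun i a => C (derivative a) * X ^ i
  map_add' p q := by
    simp only [C_mul_X_pow_eq_monomial]
    exact Polynomial.sum_add_index _ _ _ (by simp) (by simp)
  map_smul' c p := by
    simp only [C_mul_X_pow_eq_monomial, RingHom.id_apply]
    rw [Polynomial.sum_smul_index' _ _ _ (by simp), Polynomial.smul_sum]
    simp

@[simp]
lemma coeff_derivCoeffs (h : Polynomial (Polynomial ℝ)) (j : ℕ) :
    (derivCoeffs h).coeff j = derivative (h.coeff j) := by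
  change (h.sum fun i a => C (derivative a) * X ^ i).coeff j = _
  simp only [C_mul_X_pow_eq_monomial, Polynomial.sum_def, finsetSum_coeff, coeff_monomial]
  rw [Finset.sum_ite_eq']
  split_ifs with hj
  · rfl
  · simp [notMem_support_iff.mp hj]

lemma coeff_iterate_derivCoeffs (h : Polynomial (Polynomial ℝ)) (i j : ℕ) :
    (derivCoeffs^[i] h).coeff j = derivative^[i] (h.coeff j) := by
  induction i with
  | zero => rfl
  | succ i ih =>
    rw [Function.iterate_succ_apply', coeff_derivCoeffs, ih, Function.iterate_succ_apply']

noncomputable def mulX : Module.End ℝ (Polynomial (Polynomial ℝ)) := LinearMap.mulLeft ℝ X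

@[simp]
lemma mulX_apply (h : Polynomial (Polynomial ℝ)) : mulX h = X * h := rfl

lemma dMulP_eq_derivCoeffs_add : dMulP = ⇑(derivCoeffs + mulX) := by
  ext1 h
  exact add_comm _ _

lemma commute_derivCoeffs_mulX : Commute derivCoeffs mulX := by
  ext h j
  rcases j with _ | j <;> simp

lemma iterate_dMulP (k : ℕ) (h : Polynomial (Polynomial ℝ)) :
    dMulP^[k] h = ∑ i ∈ range (k + 1), k.choose i • derivCoeffs^[i] (X ^ (k - i) * h) := by
  rw [dMulP_eq_derivCoeffs_add, ← Module.End.coe_pow, commute_derivCoeffs_mulX.add_pow]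
  simp only [LinearMap.sum_apply, Module.End.mul_apply, Module.End.natCast_apply,
    map_nsmul, mulX, LinearMap.pow_mulLeft, LinearMap.mulLeft_apply, Module.End.coe_pow]

def chooseDescSum (d k : ℕ) : ℕ := ∑ j ∈ range (k + 1), k.choose j * d.descFactorial j

lemma chooseDescSum_eq_sum_factorial_mul (d : ℕ) {k n : ℕ} (hkn : k ≤ n) :
    chooseDescSum d k = ∑ j ∈ range (n + 1), j.factorial * k.choose j * d.choose j := by
  rw [chooseDescSum]
  refine sum_subset (range_subset_range.2 (Nat.succ_le_succ hkn)) (fun j _ hjk => ?_) |>.trans ?_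
  · simp [Nat.choose_eq_zero_of_lt (by simpa using hjk : k < j)]
  · exact sum_congr rfl fun j _ => by rw [Nat.descFactorial_eq_factorial_mul_choose]; ring

lemma chooseDescSum_comm (d k : ℕ) : chooseDescSum d k = chooseDescSum k d := by
  rw [chooseDescSum_eq_sum_factorial_mul d (Nat.le_add_right k d),
    chooseDescSum_eq_sum_factorial_mul k (Nat.le_add_left d k)]
  exact sum_congr rfl fun j _ => by ring

lemma chooseDescSum_two (k : ℕ) : chooseDescSum 2 k = k ^ 2 + k + 1 := by
  rw [chooseDescSum_comm, chooseDescSum]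
  rcases k with _ | k <;> simp [sum_range_succ, Nat.descFactorial]
  ring

lemma pred_mul_chooseDescSum_le (d k : ℕ) : (d - 1) * chooseDescSum d k ≤ d ^ (k + 1) := by
  rcases d with _ | e
  · simp
  have hterm : ∀ j, e * (e + 1).descFactorial j ≤ (e + 1) * e ^ j := by
    rintro (_ | j)
    · simp
    · rw [Nat.succ_descFactorial_succ, pow_succ]
      have := Nat.descFactorial_le_pow e j
      calc e * ((e + 1) * e.descFactorial j) = (e + 1) * (e.descFactorial j * e) := by ring
        _ ≤ (e + 1) * (e ^ j * e) := by gcongr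
  calc (e + 1 - 1) * chooseDescSum (e + 1) k
      = ∑ j ∈ range (k + 1), k.choose j * (e * (e + 1).descFactorial j) := by
        rw [Nat.add_sub_cancel, chooseDescSum, mul_sum]
        exact sum_congr rfl fun j _ => by ring
    _ ≤ ∑ j ∈ range (k + 1), k.choose j * ((e + 1) * e ^ j) :=
        sum_le_sum fun j _ => Nat.mul_le_mul_left _ (hterm j)
    _ = (e + 1) * (e + 1) ^ k := by
        rw [add_pow, mul_sum]
        exact sum_congr rfl fun j _ => by simp only [Nat.cast_id]; ring
    _ = (e + 1) ^ (k + 1) := (pow_succ' _ _).symm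

lemma chooseDescSum_sq_add_le {d : ℕ} (hd : 3 ≤ d) (k : ℕ) :
    chooseDescSum d k ^ 2 + d ^ (2 * k) ≤ d ^ (2 * (k + 1)) := by
  obtain ⟨a, rfl⟩ : ∃ a, d = a + 1 := ⟨d - 1, by omega⟩
  have hβ : a * chooseDescSum (a + 1) k ≤ (a + 1) * (a + 1) ^ k := by
    simpa [pow_succ'] using pred_mul_chooseDescSum_le (a + 1) k
  -- `d ^ 2 ≤ (d - 1) ^ 2 * (d ^ 2 - 1)` for `d ≥ 3`
  have ha : (a + 1) ^ 2 ≤ a ^ 2 * (a ^ 2 + 2 * a) := by nlinarith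
  have hsq : a ^ 2 * chooseDescSum (a + 1) k ^ 2
      ≤ a ^ 2 * ((a ^ 2 + 2 * a) * ((a + 1) ^ k) ^ 2) :=
    calc a ^ 2 * chooseDescSum (a + 1) k ^ 2 = (a * chooseDescSum (a + 1) k) ^ 2 := by ring
      _ ≤ ((a + 1) * (a + 1) ^ k) ^ 2 := by gcongr
      _ = (a + 1) ^ 2 * ((a + 1) ^ k) ^ 2 := by ring
      _ ≤ a ^ 2 * ((a ^ 2 + 2 * a) * ((a + 1) ^ k) ^ 2) := by rw [← mul_assoc]; gcongr
  have := Nat.le_of_mul_le_mul_left hsq (pow_pos (by omega) 2)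
  calc chooseDescSum (a + 1) k ^ 2 + (a + 1) ^ (2 * k)
      ≤ (a ^ 2 + 2 * a) * ((a + 1) ^ k) ^ 2 + ((a + 1) ^ k) ^ 2 := by rw [pow_mul']; gcongr
    _ = (a + 1) ^ (2 * (k + 1)) := by ring

lemma sum_range_chooseDescSum_sq_le_of_three_le {d : ℕ} (hd : 3 ≤ d) (N : ℕ) :
    ∑ k ∈ range N, chooseDescSum d k ^ 2 ≤ d ^ (2 * N) := by
  induction N with
  | zero => simp
  | succ N ih =>
    rw [sum_range_succ]
    linarith [chooseDescSum_sq_add_le hd N]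

lemma sq_add_self_add_one_sq_le {k : ℕ} (hk : 3 ≤ k) : (k ^ 2 + k + 1) ^ 2 ≤ 3 * 4 ^ k := by
  induction k, hk using Nat.le_induction with
  | base => norm_num
  | succ k hk ih =>
    have : (k + 1) ^ 2 + (k + 1) + 1 ≤ 2 * (k ^ 2 + k + 1) := by nlinarith
    calc ((k + 1) ^ 2 + (k + 1) + 1) ^ 2 ≤ (2 * (k ^ 2 + k + 1)) ^ 2 := by gcongr
      _ = 4 * (k ^ 2 + k + 1) ^ 2 := by ring
      _ ≤ 3 * 4 ^ (k + 1) := by rw [pow_succ 4 k]; linarith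

lemma sum_range_sq_add_self_add_one_sq_le (N : ℕ) : ∑ k ∈ range N, (k ^ 2 + k + 1) ^ 2 ≤ 4 ^ N := by
  induction N with
  | zero => simp
  | succ N ih =>
    rw [sum_range_succ]
    -- the step `(N² + N + 1)² ≤ 3 · 4^N` only holds from `N = 3` on
    rcases lt_or_ge N 3 with hN | hN
    · interval_cases N <;> simp [sum_range_succ]
    · linarith [sq_add_self_add_one_sq_le hN, pow_succ 4 N]

lemma sum_range_chooseDescSum_sq_le {d : ℕ} (hd : 2 ≤ d) (N : ℕ) :
    ∑ k ∈ range N, chooseDescSum d k ^ 2 ≤ d ^ (2 * N) := by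
  rcases hd.eq_or_lt with rfl | hd
  · simpa [chooseDescSum_two, pow_mul] using sum_range_sq_add_self_add_one_sq_le N
  · exact sum_range_chooseDescSum_sq_le_of_three_le hd N

lemma sum_range_sq_coeff_derivative_le {p : Polynomial ℝ} {e K : ℕ} (hp : p.natDegree ≤ e)
    (hK : e < K) :
    ∑ k ∈ range K, (derivative p).coeff k ^ 2 ≤ e ^ 2 * ∑ k ∈ range K, p.coeff k ^ 2 := by
  have hpK : p.coeff K = 0 := coeff_eq_zero_of_natDegree_lt (hp.trans_lt hK)
  have hshift : ∑ k ∈ range K, p.coeff (k + 1) ^ 2 ≤ ∑ k ∈ range K, p.coeff k ^ 2 := by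
    have h := sum_range_succ' (fun k => p.coeff k ^ 2) K
    rw [sum_range_succ, hpK] at h
    linarith [sq_nonneg (p.coeff 0)]
  calc ∑ k ∈ range K, (derivative p).coeff k ^ 2
      ≤ ∑ k ∈ range K, e ^ 2 * p.coeff (k + 1) ^ 2 := by
        refine sum_le_sum fun k _ => ?_
        rw [coeff_derivative, mul_pow, mul_comm]
        rcases le_or_gt (k + 1) e with hk | hk
        · gcongr
          exact_mod_cast hk
        · simp [coeff_eq_zero_of_natDegree_lt (hp.trans_lt hk)]
    _ = e ^ 2 * ∑ k ∈ range K, p.coeff (k + 1) ^ 2 := (mul_sum _ _ _).symm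
    _ ≤ e ^ 2 * ∑ k ∈ range K, p.coeff k ^ 2 := by gcongr

noncomputable def coeffVec (J K : ℕ) :
    Polynomial (Polynomial ℝ) →ₗ[ℝ] EuclideanSpace ℝ (Fin J × Fin K) where
  toFun h := WithLp.toLp 2 fun jk => (h.coeff jk.1).coeff jk.2
  map_add' p q := by ext; simp
  map_smul' c p := by ext; simp

section coeffVec

variable {J K : ℕ}

lemma norm_coeffVec_sq (h : Polynomial (Polynomial ℝ)) :
    ‖coeffVec J K h‖ ^ 2 = ∑ j ∈ range J, ∑ k ∈ range K, (h.coeff j).coeff k ^ 2 := by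
  simp [EuclideanSpace.real_norm_sq_eq, coeffVec, Fintype.sum_prod_type, Finset.sum_range]

lemma norm_coeffVec_X_mul_le (h : Polynomial (Polynomial ℝ)) :
    ‖coeffVec J K (X * h)‖ ≤ ‖coeffVec J K h‖ := by
  rw [← sq_le_sq₀ (norm_nonneg _) (norm_nonneg _), norm_coeffVec_sq, norm_coeffVec_sq]
  rcases J with _ | J
  · simp
  rw [sum_range_succ', sum_range_succ]
  simp only [coeff_X_mul, coeff_X_mul_zero, coeff_zero, ne_eq, OfNat.ofNat_ne_zero,
    not_false_eq_true, zero_pow, sum_const_zero, add_zero]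
  exact le_add_of_nonneg_right (sum_nonneg fun _ _ => sq_nonneg _)

lemma norm_coeffVec_X_pow_mul_le (h : Polynomial (Polynomial ℝ)) (a : ℕ) :
    ‖coeffVec J K (X ^ a * h)‖ ≤ ‖coeffVec J K h‖ := by
  induction a with
  | zero => simp
  | succ a ih =>
    rw [pow_succ', mul_assoc]
    exact (norm_coeffVec_X_mul_le _).trans ih

lemma norm_coeffVec_derivCoeffs_le {h : Polynomial (Polynomial ℝ)} {e : ℕ}
    (he : ∀ j, (h.coeff j).natDegree ≤ e) (hK : e < K) :
    ‖coeffVec J K (derivCoeffs h)‖ ≤ e * ‖coeffVec J K h‖ := by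
  rw [← sq_le_sq₀ (norm_nonneg _) (by positivity), mul_pow, norm_coeffVec_sq, norm_coeffVec_sq,
    mul_sum]
  exact sum_le_sum fun j _ => by
    simpa using sum_range_sq_coeff_derivative_le (he j) hK

end coeffVec

section coeffDegree

variable {d : ℕ} {h : Polynomial (Polynomial ℝ)}

lemma natDegree_coeff_X_pow_mul_le (hd : ∀ j, (h.coeff j).natDegree ≤ d) (a j : ℕ) :
    ((X ^ a * h).coeff j).natDegree ≤ d := by
  rw [coeff_X_pow_mul']
  split_ifs
  exacts [hd _, by simp]

lemma natDegree_coeff_iterate_dMulP_le (hd : ∀ j, (h.coeff j).natDegree ≤ d) (k j : ℕ) :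
    ((dMulP^[k] h).coeff j).natDegree ≤ d := by
  induction k generalizing j with
  | zero => exact hd j
  | succ k ih =>
    rw [Function.iterate_succ_apply', congrFun dMulP_eq_derivCoeffs_add, LinearMap.add_apply,
      coeff_add, coeff_derivCoeffs, mulX_apply, ← pow_one X]
    exact (natDegree_add_le _ _).trans (max_le
      ((natDegree_derivative_le _).trans ((Nat.sub_le _ _).trans (ih j)))
      (natDegree_coeff_X_pow_mul_le ih 1 j))

variable {J K : ℕ}

lemma norm_coeffVec_iterate_derivCoeffs_le (hd : ∀ j, (h.coeff j).natDegree ≤ d) (hK : d < K)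
    (i : ℕ) : ‖coeffVec J K (derivCoeffs^[i] h)‖ ≤ d.descFactorial i * ‖coeffVec J K h‖ := by
  induction i with
  | zero => simp
  | succ i ih =>
    have hdeg : ∀ j, ((derivCoeffs^[i] h).coeff j).natDegree ≤ d - i := fun j => by
      rw [coeff_iterate_derivCoeffs]
      exact (natDegree_iterate_derivative _ _).trans (Nat.sub_le_sub_right (hd j) i)
    rw [Function.iterate_succ_apply', Nat.descFactorial_succ, Nat.cast_mul, mul_assoc]
    exact (norm_coeffVec_derivCoeffs_le hdeg ((Nat.sub_le d i).trans_lt hK)).trans (by gcongr)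

lemma norm_coeffVec_iterate_dMulP_le (hd : ∀ j, (h.coeff j).natDegree ≤ d) (hK : d < K)
    (k : ℕ) : ‖coeffVec J K (dMulP^[k] h)‖ ≤ chooseDescSum d k * ‖coeffVec J K h‖ := by
  rw [iterate_dMulP, map_sum]
  calc _ ≤ ∑ i ∈ range (k + 1), ‖coeffVec J K (k.choose i • derivCoeffs^[i] (X ^ (k - i) * h))‖ :=
        norm_sum_le _ _
    _ ≤ ∑ i ∈ range (k + 1), k.choose i * (d.descFactorial i * ‖coeffVec J K h‖) := by
        gcongr with i
        rw [map_nsmul, RCLike.norm_nsmul ℝ, nsmul_eq_mul]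
        gcongr
        exact (norm_coeffVec_iterate_derivCoeffs_le (natDegree_coeff_X_pow_mul_le hd _) hK i).trans
          (by gcongr; exact norm_coeffVec_X_pow_mul_le _ _)
    _ = chooseDescSum d k * ‖coeffVec J K h‖ := by simp [chooseDescSum, sum_mul, mul_assoc]

end coeffDegree

lemma sum_comp_coeff_le_sum {R : Type*} [Semiring R] (p : R[X]) {g : R → ℝ} (hg0 : g 0 = 0)
    (hg : ∀ a, 0 ≤ g a) (s : Finset ℕ) : ∑ k ∈ s, g (p.coeff k) ≤ p.sum fun _ a => g a := by
  classical
  rw [Polynomial.sum_def]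
  calc ∑ k ∈ s, g (p.coeff k) = ∑ k ∈ s ∩ p.support, g (p.coeff k) :=
        (sum_subset inter_subset_left fun k hks hk => by
          simp [notMem_support_iff.mp fun h => hk (mem_inter.2 ⟨hks, h⟩), hg0]).symm
    _ ≤ ∑ k ∈ p.support, g (p.coeff k) :=
        sum_le_sum_of_subset_of_nonneg inter_subset_right fun _ _ _ => hg _

lemma polyNormSq_nonneg (p : Polynomial ℝ) : 0 ≤ polyNormSq p :=
  sum_nonneg fun _ _ => sq_nonneg _

lemma dNormSq_nonneg (h : Polynomial (Polynomial ℝ)) : 0 ≤ dNormSq h :=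
  sum_nonneg fun _ _ => polyNormSq_nonneg _

lemma norm_coeffVec_sq_le_dNormSq (J K : ℕ) (h : Polynomial (Polynomial ℝ)) :
    ‖coeffVec J K h‖ ^ 2 ≤ dNormSq h := by
  rw [norm_coeffVec_sq]
  exact (sum_le_sum fun j _ => sum_comp_coeff_le_sum (h.coeff j) (by simp) sq_nonneg _).trans
    (sum_comp_coeff_le_sum h (by simp [polyNormSq]) polyNormSq_nonneg _)

lemma norm_coeffVec_sq_eq {J K : ℕ} {h : Polynomial (Polynomial ℝ)}
    (hK : ∀ j, (h.coeff j).natDegree < K) :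
    ‖coeffVec J K h‖ ^ 2 = ∑ j : Fin J, polyNormSq (h.coeff j) := by
  rw [norm_coeffVec_sq, Finset.sum_range]
  exact sum_congr rfl fun j _ => by rw [polyNormSq, sum_over_range' _ (fun _ => by simp) K (hK j)]

lemma sum_rows_iterate_dMulP_le (J N : ℕ) {d : ℕ} {h : Polynomial (Polynomial ℝ)} (hd2 : 2 ≤ d)
    (hd : ∀ j, (h.coeff j).natDegree ≤ d) :
    ∑ i ∈ range N, ∑ j : Fin J, polyNormSq ((dMulP^[i] h).coeff j) ≤
      (d : ℝ) ^ (2 * N) * dNormSq h := by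
  have hK : d < d + 1 := d.lt_succ_self
  calc ∑ i ∈ range N, ∑ j : Fin J, polyNormSq ((dMulP^[i] h).coeff j)
      = ∑ i ∈ range N, ‖coeffVec J (d + 1) (dMulP^[i] h)‖ ^ 2 :=
        sum_congr rfl fun i _ => (norm_coeffVec_sq_eq fun j =>
          (natDegree_coeff_iterate_dMulP_le hd i j).trans_lt hK).symm
    _ ≤ ∑ i ∈ range N, (chooseDescSum d i : ℝ) ^ 2 * dNormSq h := by
        gcongr with i
        calc ‖coeffVec J (d + 1) (dMulP^[i] h)‖ ^ 2
            ≤ (chooseDescSum d i * ‖coeffVec J (d + 1) h‖) ^ 2 := by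
              gcongr
              exact norm_coeffVec_iterate_dMulP_le hd hK i
          _ ≤ (chooseDescSum d i : ℝ) ^ 2 * dNormSq h := by
              rw [mul_pow]
              gcongr
              exact norm_coeffVec_sq_le_dNormSq _ _ h
    _ = ((∑ i ∈ range N, chooseDescSum d i ^ 2 : ℕ) : ℝ) * dNormSq h := by
        push_cast
        rw [sum_mul]
    _ ≤ (d : ℝ) ^ (2 * N) * dNormSq h := by
        gcongr
        · exact dNormSq_nonneg h
        · exact_mod_cast sum_range_chooseDescSum_sq_le hd2 N

lemma sum_polyNormSq_sylvP (f g : Polynomial (Polynomial ℝ)) (m n : ℕ) :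
    ∑ i : Fin (m + n), ∑ j : Fin (m + n), polyNormSq (sylvP f g m n i j) =
      ∑ i ∈ range n, ∑ j : Fin (m + n), polyNormSq ((dMulP^[i] f).coeff j) +
        ∑ i ∈ range m, ∑ j : Fin (m + n), polyNormSq ((dMulP^[i] g).coeff j) := by
  let row : ℕ → ℝ := fun i => ∑ j : Fin (m + n),
    polyNormSq (if i < n then (dMulP^[i] f).coeff j else (dMulP^[i - n] g).coeff j)
  calc ∑ i : Fin (m + n), ∑ j : Fin (m + n), polyNormSq (sylvP f g m n i j)
      = ∑ i ∈ range (n + m), row i := by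
        rw [add_comm n m, Finset.sum_range]
        exact sum_congr rfl fun i _ => sum_congr rfl fun j _ => by
          simp only [sylvP, Matrix.of_apply, apply_ite polyNormSq]
    _ = _ := by
        rw [sum_range_add]
        congr 1
        · exact sum_congr rfl fun i hi => by simp [row, mem_range.1 hi]
        · exact sum_congr rfl fun i _ => by simp [row]

theorem sylvP_frobenius_bound_general (f g : Polynomial (Polynomial ℝ)) (m n d : ℕ)
    (hd : 2 ≤ d)
    (hft : ∀ i, (f.coeff i).natDegree ≤ d) (hgt : ∀ i, (g.coeff i).natDegree ≤ d) :
    ∑ i : Fin (m + n), ∑ j : Fin (m + n), polyNormSq (sylvP f g m n i j) ≤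
      (d : ℝ) ^ (2 * n) * dNormSq f + (d : ℝ) ^ (2 * m) * dNormSq g := by
  rw [sum_polyNormSq_sylvP]
  exact add_le_add (sum_rows_iterate_dMulP_le _ n hd hft) (sum_rows_iterate_dMulP_le _ m hd hgt)

/-- Frobenius norm bound for the differential Sylvester matrix. -/
theorem sylvP_frobenius_bound (f g : Polynomial (Polynomial ℝ)) (m n d : ℕ)
    (hfd : f.degree ≤ (m : WithBot ℕ)) (hgd : g.degree ≤ (n : WithBot ℕ))
    (hd : 2 ≤ d)
    (hft : ∀ i, (f.coeff i).natDegree ≤ d) (hgt : ∀ i, (g.coeff i).natDegree ≤ d) :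
    ∑ i : Fin (m + n), ∑ j : Fin (m + n), polyNormSq (sylvP f g m n i j) ≤
      (d : ℝ) ^ (2 * n) * dNormSq f + (d : ℝ) ^ (2 * m) * dNormSq g :=
  sylvP_frobenius_bound_general f g m n d hd hft hgt
end
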